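/- Let I_𝕀 be the smallest topologically invariant σ-ideal on ℝ² containing the segment 𝕀 = [0,1]×{0}; it consists of all subsets of countable unions ⋃_{k∈ω} h_k(𝕀) where each h_k : ℝ² → ℝ² is a homeomorphism. Then for every uncountable set T ⊆ [0,1], the set ⋃_{t∈T} [0,1]×{t} does not belong to I_𝕀. -/

import Mathlib

open Set Cardinal

/-- The segment `𝕀 = [0,1] × {0}` in the plane `ℝ²`. -/
def segII : Set (ℝ × ℝ) := Set.Icc (0 : ℝ) 1 ×ˢ ({0} : Set ℝ)

/-- The smallest topologically invariant σ-ideal on `ℝ²` containing the segment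
`𝕀 = [0,1] × {0}`: it consists of all subsets of countable unions
`⋃ₖ hₖ(𝕀)` where each `hₖ` is a homeomorphism of `ℝ²`. -/
def idealII : Set (Set (ℝ × ℝ)) :=
  {A | ∃ h : ℕ → ((ℝ × ℝ) ≃ₜ (ℝ × ℝ)), A ⊆ ⋃ k, (⇑(h k)) '' segII}

/-!
If the union of the horizontal segments at heights `t ∈ T` were covered by countably many
homeomorphic images `hₖ(𝕀)`, then for each `t ∈ T` the Baire category theorem applied to the
segment at height `t` gives some `k` such that `hₖ(𝕀)` contains a nondegenerate subsegment at
height `t`. Its preimage under `hₖ` is a connected subset of `𝕀` with more than one point, so it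
contains a rational point `(q, 0)`; hence `t` is the second coordinate of `hₖ(q, 0)`. There are
only countably many such values, so `T` is countable.
-/

theorem IsOpen.exists_nonempty_interior_of_subset_iUnion_closed {X ι : Type*} [TopologicalSpace X]
    [BaireSpace X] [Countable ι] {U : Set X} (hU : IsOpen U) (hne : U.Nonempty) {F : ι → Set X}
    (hF : ∀ i, IsClosed (F i)) (hcover : U ⊆ ⋃ i, F i) : ∃ i, (interior (F i)).Nonempty := by
  have := hU.baireSpace
  have := hne.to_subtype
  obtain ⟨i, x, hx⟩ := nonempty_interior_of_iUnion_of_closed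
    (f := fun i => ((↑) : U → X) ⁻¹' F i) (fun i => (hF i).preimage continuous_subtype_val)
    (eq_univ_of_forall fun x => by simpa using hcover x.2)
  exact ⟨i, x, interior_mono (image_preimage_subset _ _)
    (hU.isOpenMap_subtype_val.image_interior_subset _ ⟨x, hx, rfl⟩)⟩

theorem IsPreconnected.exists_rat_mem {s : Set ℝ} (hs : IsPreconnected s) (hnt : s.Nontrivial) :
    ∃ q : ℚ, (q : ℝ) ∈ s := by
  obtain ⟨a, ha, b, hb, hab⟩ := hnt
  wlog hlt : a < b generalizing a b
  · exact this b hb a ha hab.symm (lt_of_le_of_ne (not_lt.1 hlt) hab.symm)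
  obtain ⟨q, haq, hqb⟩ := exists_rat_btwn hlt
  exact ⟨q, hs.Icc_subset ha hb ⟨haq.le, hqb.le⟩⟩

theorem IsPreconnected.exists_rat_mem_of_subset_prod_singleton {P : Set (ℝ × ℝ)} {y : ℝ}
    (hP : IsPreconnected P) (hnt : P.Nontrivial) (hline : P ⊆ Set.univ ×ˢ {y}) :
    ∃ q : ℚ, ((q : ℝ), y) ∈ P := by
  have hinj : InjOn Prod.fst P := fun p hp p' hp' h =>
    Prod.ext h (((hline hp).2 : p.2 = y).trans (hline hp').2.symm)
  obtain ⟨q, p, hp, hpq⟩ := (hP.image _ continuous_fst.continuousOn).exists_rat_mem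
    (hnt.image_of_injOn hinj)
  obtain ⟨-, hp2 : p.2 = y⟩ := hline hp
  exact ⟨q, by rw [← hpq, ← hp2]; exact hp⟩

theorem mem_range_snd_rat_of_segment_subset_iUnion (h : ℕ → (ℝ × ℝ) ≃ₜ (ℝ × ℝ)) {a b t : ℝ}
    (hab : a < b) (hcover : Icc a b ×ˢ {t} ⊆ ⋃ k, h k '' segII) :
    t ∈ range fun kq : ℕ × ℚ => (h kq.1 ((kq.2 : ℝ), 0)).2 := by
  set F : ℕ → Set ℝ := fun k => (·, t) ⁻¹' (h k '' segII)
  have hF : ∀ k, IsClosed (F k) := fun k =>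
    ((isCompact_Icc.prod isCompact_singleton).image (h k).continuous).isClosed.preimage
      (continuous_id.prodMk continuous_const)
  obtain ⟨k, hk⟩ := isOpen_Ioo.exists_nonempty_interior_of_subset_iUnion_closed
    (nonempty_Ioo.2 hab) hF fun x hx => by
      simpa [F] using hcover (mk_mem_prod (Ioo_subset_Icc_self hx) rfl)
  obtain ⟨c, d, hcd, hsub⟩ := isOpen_interior.exists_Ioo_subset hk
  set S := Ioo c d ×ˢ ({t} : Set ℝ)
  have hS : S ⊆ h k '' segII := by
    rintro ⟨x, y⟩ ⟨hx, rfl : y = t⟩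
    exact interior_subset (s := F k) (hsub hx)
  have hpre : (h k).symm '' S ⊆ Set.univ ×ˢ {0} := by
    rintro _ ⟨p, hp, rfl⟩
    obtain ⟨s, hs, rfl⟩ := hS hp
    simpa using hs.2
  obtain ⟨q, hq⟩ := IsPreconnected.exists_rat_mem_of_subset_prod_singleton
    (((convex_Ioo c d).prod (convex_singleton t)).isPreconnected.image _
      (h k).symm.continuous.continuousOn)
    (((Ioo_infinite hcd).prod_left (singleton_nonempty t)).nontrivial.image (h k).symm.injective)
    hpre
  obtain ⟨p, ⟨-, hp2⟩, hp⟩ := hq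
  exact ⟨(k, q), by simpa [← hp] using hp2⟩

theorem stmt10_general (T : Set ℝ) (hunc : ¬ T.Countable) :
    (⋃ t ∈ T, Set.Icc (0 : ℝ) 1 ×ˢ ({t} : Set ℝ)) ∉ idealII := by
  rintro ⟨h, hsub⟩
  exact hunc ((countable_range _).mono fun t ht =>
    mem_range_snd_rat_of_segment_subset_iUnion h zero_lt_one
      ((subset_biUnion_of_mem ht).trans hsub))

/-- For every uncountable `T ⊆ [0,1]` the set `⋃_{t ∈ T} [0,1] × {t}` is not in `I_𝕀`. -/
theorem stmt10 (T : Set ℝ) (hT : T ⊆ Set.Icc (0 : ℝ) 1) (hunc : ¬ T.Countable) :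
    (⋃ t ∈ T, Set.Icc (0 : ℝ) 1 ×ˢ ({t} : Set ℝ)) ∉ idealII :=
  stmt10_general T hunc
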